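/- The operators ∂_{2,q²} and γ₂^{−2}∂_{1,q²} on P(𝕊) = ℂ[x₁,x₂,y] each commute with F: F∘∂_{2,q²} = ∂_{2,q²}∘F and F∘(γ₂^{−2}∂_{1,q²}) = (γ₂^{−2}∂_{1,q²})∘F. Consequently both are generalized symmetries of F, and for every integer d ≥ 1 they map M^d into M^{d−1} (and they annihilate nothing outside this pattern: they send ker F into ker F and lower the total x-degree by one). -/
import Mathlib


noncomputable section

open MvPolynomial

/-- The quantum integer `[n]_q = (q^n - q^{-n})/(q - q^{-1})`. -/
def qint (q : ℂ) (n : ℤ) : ℂ := (q ^ n - q ^ (-n)) / (q - q⁻¹)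

/-- Build a linear operator on `ℂ[x₁,…,x_N]` from its values on the monomial basis. -/
def mkOp {N : ℕ} (f : (Fin N →₀ ℕ) → MvPolynomial (Fin N) ℂ) :
    Module.End ℂ (MvPolynomial (Fin N) ℂ) :=
  (MvPolynomial.basisMonomials (Fin N) ℂ).constr ℂ fun α => f α

/-- `μ_j`: multiplication by `x_j`. -/
def mu {N : ℕ} (j : Fin N) : Module.End ℂ (MvPolynomial (Fin N) ℂ) :=
  mkOp fun α => monomial (α + Finsupp.single j 1) 1

/-- `γ_j^e` (e ∈ ℤ): multiply the monomial `x^α` by `q^{e·α_j}`. -/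
def gam {N : ℕ} (q : ℂ) (j : Fin N) (e : ℤ) : Module.End ℂ (MvPolynomial (Fin N) ℂ) :=
  mkOp fun α => q ^ (e * (α j : ℤ)) • monomial α 1

/-- The `p`-shifted partial `q`-derivative in direction `j`:
`x^α ↦ [α_j]_p · x^{α - ε_j}` (zero when `α_j = 0`, since `[0]_p = 0`). -/
def del {N : ℕ} (p : ℂ) (j : Fin N) : Module.End ℂ (MvPolynomial (Fin N) ℂ) :=
  mkOp fun α => qint p (α j) • monomial (α - Finsupp.single j 1) 1

/-- `P(𝕊) = ℂ[x₁,x₂,y]`, with variables indexed `0 ↦ x₁`, `1 ↦ x₂`, `2 ↦ y`. -/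
abbrev PS3 := MvPolynomial (Fin 3) ℂ

/-- `K_Δ = q·γ₁²γ₂^{-2}ω²`. -/
def KDel (q : ℂ) : Module.End ℂ PS3 := q • (gam q 0 2 * gam q 1 (-2) * gam q 2 2)

/-- `K_Δ^{-1} = q^{-1}·γ₁^{-2}γ₂²ω^{-2}`. -/
def KDel' (q : ℂ) : Module.End ℂ PS3 := q⁻¹ • (gam q 0 (-2) * gam q 1 2 * gam q 2 (-2))

/-- `E_Δ = q·ω²μ₁∂_{2,q²} + ν²/[2]_q`. -/
def EDel (q : ℂ) : Module.End ℂ PS3 :=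
  q • (gam q 2 2 * mu 0 * del (q ^ 2) 1) + (qint q 2)⁻¹ • (mu 2 * mu 2)

/-- `F_Δ = μ₂∂_{1,q²} − (1/[2]_q)·γ₁^{-2}γ₂²∇²`. -/
def FDel (q : ℂ) : Module.End ℂ PS3 :=
  mu 1 * del (q ^ 2) 0 - (qint q 2)⁻¹ • (gam q 0 (-2) * gam q 1 2 * (del q 2 * del q 2))

/-- `K = q²·γ₁²γ₂²`. -/
def Kop (q : ℂ) : Module.End ℂ PS3 := (q ^ 2 : ℂ) • (gam q 0 2 * gam q 1 2)

/-- `K^{-1} = q^{-2}·γ₁^{-2}γ₂^{-2}`. -/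
def Kop' (q : ℂ) : Module.End ℂ PS3 := (q ^ (-2 : ℤ)) • (gam q 0 (-2) * gam q 1 (-2))

/-- `E = [2]_q·(q²·γ₂²ωμ₁∇ + μ₂ν)`. -/
def Eop (q : ℂ) : Module.End ℂ PS3 :=
  qint q 2 • ((q ^ 2 : ℂ) • (gam q 1 2 * gam q 2 1 * mu 0 * del q 2) + mu 1 * mu 2)

/-- `F = ∂_{1,q²}ν − γ₁^{-2}ω∂_{2,q²}∇`, the quantum symplectic Dirac operator. -/
def Fop (q : ℂ) : Module.End ℂ PS3 :=
  del (q ^ 2) 0 * mu 2 - gam q 0 (-2) * gam q 2 1 * (del (q ^ 2) 1 * del q 2)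

/-- `P(𝕊)^d`: the span of the monomials `x₁^a x₂^b y^c` with `a + b = d`. -/
def PSd (d : ℕ) : Submodule ℂ PS3 :=
  Submodule.span ℂ {p | ∃ α : Fin 3 →₀ ℕ, α 0 + α 1 = d ∧ p = monomial α (1 : ℂ)}

/-- `M^d = ker F ⊓ P(𝕊)^d`: the degree-`d` symplectic monogenics. -/
def Mono (q : ℂ) (d : ℕ) : Submodule ℂ PS3 := LinearMap.ker (Fop q) ⊓ PSd d


-- ### Auxiliary lemmas ###

lemma mkOp_mon {N : ℕ} (f : (Fin N →₀ ℕ) → MvPolynomial (Fin N) ℂ) (α : Fin N →₀ ℕ) :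
    mkOp f (monomial α (1:ℂ)) = f α := by
  have h : monomial α (1:ℂ) = (MvPolynomial.basisMonomials (Fin N) ℂ) α := by
    simp [MvPolynomial.coe_basisMonomials]
  rw [mkOp, h, Module.Basis.constr_basis]

@[simp] lemma mu_mon {N : ℕ} (j : Fin N) (α) :
    mu j (monomial α (1:ℂ)) = monomial (α + Finsupp.single j 1) 1 := mkOp_mon _ _
@[simp] lemma gam_mon {N : ℕ} (q : ℂ) (j : Fin N) (e : ℤ) (α) :
    gam q j e (monomial α (1:ℂ)) = q ^ (e * (α j : ℤ)) • monomial α 1 := mkOp_mon _ _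
@[simp] lemma del_mon {N : ℕ} (p : ℂ) (j : Fin N) (α) :
    del p j (monomial α (1:ℂ)) = qint p (α j) • monomial (α - Finsupp.single j 1) 1 :=
  mkOp_mon _ _

attribute [irreducible] mkOp mu gam del

@[simp] lemma qint_zero (p : ℂ) : qint p 0 = 0 := by simp [qint]

section coords
variable (α : Fin 3 →₀ ℕ)
@[simp] lemma A1 : (α + Finsupp.single 2 1 : Fin 3 →₀ ℕ) 0 = α 0 := by simp
@[simp] lemma A2 : (α - Finsupp.single 2 1 : Fin 3 →₀ ℕ) 1 = α 1 := by simp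
@[simp] lemma A3 : (α - Finsupp.single 2 1 - Finsupp.single 1 1 : Fin 3 →₀ ℕ) 2 = α 2 - 1 := by
  simp
@[simp] lemma A4 : (α - Finsupp.single 2 1 - Finsupp.single 1 1 : Fin 3 →₀ ℕ) 0 = α 0 := by simp
@[simp] lemma A5 : (α - Finsupp.single 1 1 : Fin 3 →₀ ℕ) 0 = α 0 := by simp
@[simp] lemma A6 : (α - Finsupp.single 1 1 : Fin 3 →₀ ℕ) 1 = α 1 - 1 := by simp
@[simp] lemma A7 : (α - Finsupp.single 1 1 : Fin 3 →₀ ℕ) 2 = α 2 := by simp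
@[simp] lemma A8 : (α + Finsupp.single 2 1 - Finsupp.single 0 1 : Fin 3 →₀ ℕ) 1 = α 1 := by simp
@[simp] lemma A9 : (α - Finsupp.single 2 1 - Finsupp.single 1 1 : Fin 3 →₀ ℕ) 1 = α 1 - 1 := by
  simp
@[simp] lemma A10 : (α - Finsupp.single 0 1 : Fin 3 →₀ ℕ) 0 = α 0 - 1 := by simp
@[simp] lemma A11 : (α - Finsupp.single 0 1 : Fin 3 →₀ ℕ) 1 = α 1 := by simp
@[simp] lemma A12 : (α - Finsupp.single 0 1 : Fin 3 →₀ ℕ) 2 = α 2 := by simp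
@[simp] lemma A13 : (α + Finsupp.single 2 1 - Finsupp.single 0 1 : Fin 3 →₀ ℕ) 0 = α 0 - 1 := by
  simp
@[simp] lemma A14 :
    (α + Finsupp.single 2 1 - Finsupp.single 0 1 - Finsupp.single 0 1 : Fin 3 →₀ ℕ) 1 = α 1 := by
  simp
@[simp] lemma A15 :
    (α - Finsupp.single 2 1 - Finsupp.single 1 1 - Finsupp.single 0 1 : Fin 3 →₀ ℕ) 1
      = α 1 - 1 := by simp
@[simp] lemma A17 : (α + Finsupp.single 2 1 : Fin 3 →₀ ℕ) 1 = α 1 := by simp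

lemma I1 : α - Finsupp.single 1 1 + Finsupp.single 2 1 - Finsupp.single 0 1
    = α + Finsupp.single 2 1 - Finsupp.single 0 1 - Finsupp.single 1 1 := by
  ext i; fin_cases i <;> simp
lemma I2 : α - Finsupp.single 1 1 - Finsupp.single 2 1 - Finsupp.single 1 1
    = α - Finsupp.single 2 1 - Finsupp.single 1 1 - Finsupp.single 1 1 := by
  ext i; fin_cases i <;> simp
lemma I3 : α - Finsupp.single 0 1 + Finsupp.single 2 1 - Finsupp.single 0 1
    = α + Finsupp.single 2 1 - Finsupp.single 0 1 - Finsupp.single 0 1 := by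
  ext i; fin_cases i <;> simp
lemma I4 : α - Finsupp.single 0 1 - Finsupp.single 2 1 - Finsupp.single 1 1
    = α - Finsupp.single 2 1 - Finsupp.single 1 1 - Finsupp.single 0 1 := by
  ext i; fin_cases i <;> simp
end coords

lemma Fop_mon (q : ℂ) (α : Fin 3 →₀ ℕ) :
    Fop q (monomial α 1) =
      qint (q ^ 2) (α 0) • monomial (α + Finsupp.single 2 1 - Finsupp.single 0 1) 1
      - (q ^ ((-2 : ℤ) * (α 0 : ℤ)) * (q ^ ((α 2 - 1 : ℕ) : ℤ) *
          (qint q (α 2) * qint (q ^ 2) (α 1)))) •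
          monomial (α - Finsupp.single 2 1 - Finsupp.single 1 1) 1 := by
  simp only [Fop, LinearMap.sub_apply, Module.End.mul_apply]
  simp only [mu_mon]
  simp only [del_mon]
  simp only [map_smul]
  simp only [del_mon]
  simp only [map_smul]
  simp only [gam_mon]
  simp only [map_smul]
  simp only [gam_mon]
  simp only [A1, A2, A3, A4, smul_smul, one_mul]
  match_scalars <;> ring

lemma comm_D (q : ℂ) : Fop q * del (q ^ 2) 1 = del (q ^ 2) 1 * Fop q := by
  refine Module.Basis.ext (MvPolynomial.basisMonomials (Fin 3) ℂ) fun α => ?_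
  simp only [MvPolynomial.coe_basisMonomials, Module.End.mul_apply]
  simp only [del_mon, map_smul]
  simp only [Fop_mon]
  simp only [map_sub, map_smul]
  simp only [del_mon]
  simp only [A9]
  simp only [A5, A6, A7, A8, smul_smul]
  rw [I1, I2]
  match_scalars <;> ring

lemma comm_G (q : ℂ) (hq : q ≠ 0) :
    Fop q * (gam q 1 (-2) * del (q ^ 2) 0) = gam q 1 (-2) * del (q ^ 2) 0 * Fop q := by
  refine Module.Basis.ext (MvPolynomial.basisMonomials (Fin 3) ℂ) fun α => ?_
  simp only [MvPolynomial.coe_basisMonomials, Module.End.mul_apply]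
  simp only [del_mon, map_smul]
  simp only [gam_mon, map_smul]
  simp only [A11]
  simp only [Fop_mon]
  simp only [map_sub, map_smul]
  simp only [del_mon]
  simp only [map_smul, gam_mon]
  simp only [A13, A15, A4]
  simp only [A1, A2, A3, A5, A6, A7, A8, A9, A10, A11, A12, A14, A17]
  rw [I3, I4]
  simp only [smul_smul]
  match_scalars
  · ring
  · cases h0 : α 0 with
    | zero => simp only [h0, Nat.cast_zero, qint_zero]; ring
    | succ a => cases h1 : α 1 with
      | zero => simp only [h1, Nat.cast_zero, qint_zero]; ring
      | succ b =>
        simp only [h0, h1, Nat.succ_sub_one]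
        push_cast
        have key : q ^ ((-2:ℤ) * ((b:ℤ) + 1)) * q ^ ((-2:ℤ) * (a:ℤ))
            = q ^ ((-2:ℤ) * ((a:ℤ) + 1)) * q ^ ((-2:ℤ) * (b:ℤ)) := by
          rw [← zpow_add₀ hq, ← zpow_add₀ hq]; ring_nf
        linear_combination (-(qint (q ^ 2) ((a:ℤ)+1) * (q ^ (((α 2 - 1 : ℕ)):ℤ) *
          (qint q ((α 2 : ℕ):ℤ) * qint (q ^ 2) ((b:ℤ)+1))))) * key

lemma genmem (e : ℕ) (α : Fin 3 →₀ ℕ) (h : α 0 + α 1 = e) : monomial α (1:ℂ) ∈ PSd e :=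
  Submodule.subset_span ⟨α, h, rfl⟩

lemma mapsPSd (T : Module.End ℂ PS3) (d e : ℕ)
    (hT : ∀ α : Fin 3 →₀ ℕ, α 0 + α 1 = d → T (monomial α 1) ∈ PSd e) :
    ∀ p ∈ PSd d, T p ∈ PSd e := by
  intro p hp
  induction hp using Submodule.span_induction with
  | mem x hx => obtain ⟨α, hα, rfl⟩ := hx; exact hT α hα
  | zero => rw [map_zero]; exact (PSd e).zero_mem
  | add x y _ _ hx hy => rw [map_add]; exact (PSd e).add_mem hx hy
  | smul c x _ hx => rw [map_smul]; exact (PSd e).smul_mem c hx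

lemma D_PSd (q : ℂ) (d : ℕ) : ∀ p ∈ PSd d, del (q^2) 1 p ∈ PSd (d-1) := by
  refine mapsPSd _ d (d-1) fun α hα => ?_
  rw [del_mon]
  cases h1 : α 1 with
  | zero => simp [h1]
  | succ b =>
    refine Submodule.smul_mem _ _ (genmem _ _ ?_)
    rw [A5, A6]; omega

lemma G_PSd (q : ℂ) (d : ℕ) :
    ∀ p ∈ PSd d, (gam q 1 (-2) * del (q^2) 0 : Module.End ℂ PS3) p ∈ PSd (d-1) := by
  refine mapsPSd _ d (d-1) fun α hα => ?_
  simp only [Module.End.mul_apply, del_mon, map_smul, gam_mon]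
  cases h0 : α 0 with
  | zero => simp [h0]
  | succ a =>
    refine Submodule.smul_mem _ _ (Submodule.smul_mem _ _ (genmem _ _ ?_))
    rw [A10, A11]; omega


theorem stmt_17 (q : ℂ) (hq : q ≠ 0) (hroot : ∀ n : ℕ, 0 < n → q ^ n ≠ 1) :
    -- ∂_{2,q²} and γ₂^{-2}∂_{1,q²} commute with F ...
    (Fop q * del (q ^ 2) 1 = del (q ^ 2) 1 * Fop q) ∧
    (Fop q * (gam q 1 (-2) * del (q ^ 2) 0) = gam q 1 (-2) * del (q ^ 2) 0 * Fop q) ∧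
    -- ... hence they are generalized symmetries of F ...
    (∃ S : Module.End ℂ PS3, Fop q * del (q ^ 2) 1 = S * Fop q) ∧
    (∃ S : Module.End ℂ PS3, Fop q * (gam q 1 (-2) * del (q ^ 2) 0) = S * Fop q) ∧
    -- ... mapping M^d into M^{d-1} for all d ≥ 1 ...
    (∀ d : ℕ, 1 ≤ d → ∀ p ∈ Mono q d,
      del (q ^ 2) 1 p ∈ Mono q (d - 1) ∧
      ((gam q 1 (-2) * del (q ^ 2) 0 : Module.End ℂ PS3)) p ∈ Mono q (d - 1)) ∧
    -- ... sending ker F into ker F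
    (∀ p, Fop q p = 0 → Fop q (del (q ^ 2) 1 p) = 0 ∧
      Fop q (((gam q 1 (-2) * del (q ^ 2) 0 : Module.End ℂ PS3)) p) = 0) := by
  have c1 := comm_D q
  have c2 := comm_G q hq
  have kerD : ∀ p : PS3, Fop q p = 0 → Fop q (del (q ^ 2) 1 p) = 0 := by
    intro p hp
    have := congrArg (fun T : Module.End ℂ PS3 => T p) c1
    simpa [Module.End.mul_apply, hp] using this
  have kerG : ∀ p : PS3, Fop q p = 0 →
      Fop q ((gam q 1 (-2) * del (q ^ 2) 0 : Module.End ℂ PS3) p) = 0 := by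
    intro p hp
    have := congrArg (fun T : Module.End ℂ PS3 => T p) c2
    simpa [Module.End.mul_apply, hp] using this
  refine ⟨c1, c2, ⟨_, c1⟩, ⟨_, c2⟩, ?_, fun p hp => ⟨kerD p hp, kerG p hp⟩⟩
  intro d hd p hp
  obtain ⟨hker, hdeg⟩ := hp
  exact ⟨⟨kerD p (LinearMap.mem_ker.mp hker), D_PSd q d p hdeg⟩,
         ⟨kerG p (LinearMap.mem_ker.mp hker), G_PSd q d p hdeg⟩⟩
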